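/- arXiv:1912.09739 — 10 statements merged into one kernel-verified Lean document; each statement's English description precedes it below -/
import Mathlib

section
/- Suppose ρ ∈ ℝ and σ > 0 satisfy: (1) f(x) ≤ ρ for every x ∈ Δ, and (2) h(x) = f(x) + σ‖Ax − b‖² > ρ for every x ∈ Δᶜ. Let h* = min{h(x) : x ∈ {−1,1}ⁿ}. Then: if Δ ≠ ∅, h* equals f* = min{f(x) : x ∈ Δ}; moreover Δ = ∅ if and only if h* > ρ. -/
open Matrix BigOperators

/-- Theorem 1 of the paper: if `ρ` bounds `f` on the feasible set `Δ`
and the penalized function `h` exceeds `ρ` on `Δᶜ`, then the minimum `h*` of `h`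
over `{−1,1}ⁿ` equals the constrained minimum `f*` whenever `Δ ≠ ∅`, and
`Δ = ∅ ↔ h* > ρ`. -/
theorem stmt_2 (n m : ℕ) (hn : 1 ≤ n) (hm : 1 ≤ m)
    (F : Matrix (Fin n) (Fin n) ℝ) (hFsymm : F.IsSymm)
    (c : Fin n → ℝ) (α : ℝ)
    (A : Matrix (Fin m) (Fin n) ℝ) (b : Fin m → ℝ)
    (f : (Fin n → ℝ) → ℝ)
    (hf : ∀ x, f x = x ⬝ᵥ F.mulVec x + c ⬝ᵥ x + α)
    (hint : ∀ x : Fin n → ℝ, (∀ i, x i = 1 ∨ x i = -1) →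
      ∀ i, ∃ z : ℤ, A.mulVec x i - b i = (z : ℝ))
    (σ : ℝ) (hσ : 0 < σ)
    (h : (Fin n → ℝ) → ℝ)
    (hh : ∀ x, h x = f x + σ * ∑ i, (A.mulVec x i - b i) ^ 2)
    (ρ : ℝ)
    (h1 : ∀ x : Fin n → ℝ, (∀ i, x i = 1 ∨ x i = -1) → A.mulVec x = b → f x ≤ ρ)
    (h2 : ∀ x : Fin n → ℝ, (∀ i, x i = 1 ∨ x i = -1) → A.mulVec x ≠ b → ρ < h x)
    (hstar : ℝ)
    (hhstar : IsLeast {v : ℝ | ∃ x : Fin n → ℝ, (∀ i, x i = 1 ∨ x i = -1) ∧ h x = v} hstar) :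
    (({x : Fin n → ℝ | (∀ i, x i = 1 ∨ x i = -1) ∧ A.mulVec x = b}).Nonempty →
      ∀ fstar : ℝ,
        IsLeast {v : ℝ | ∃ x : Fin n → ℝ, ((∀ i, x i = 1 ∨ x i = -1) ∧ A.mulVec x = b) ∧
          f x = v} fstar →
        hstar = fstar) ∧
    ({x : Fin n → ℝ | (∀ i, x i = 1 ∨ x i = -1) ∧ A.mulVec x = b} = ∅ ↔ ρ < hstar) := by
  have hfeq : ∀ x : Fin n → ℝ, A.mulVec x = b → h x = f x := by
    intro x hx
    rw [hh, hx]
    simp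
  obtain ⟨⟨x0, hx0, hx0h⟩, hlb⟩ := hhstar
  constructor
  · rintro ⟨y, hy1, hy2⟩ fstar ⟨⟨z, ⟨hz1, hz2⟩, hz3⟩, hflb⟩
    have hle : hstar ≤ f z := by
      calc hstar ≤ h z := hlb ⟨z, hz1, rfl⟩
        _ = f z := hfeq z hz2
    have hfz : f z ≤ ρ := h1 z hz1 hz2
    have hx0feas : A.mulVec x0 = b := by
      by_contra hne
      have hgt := h2 x0 hx0 hne
      have hsy : hstar ≤ h y := hlb ⟨y, hy1, rfl⟩
      have hhy := hfeq y hy2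
      have hfy := h1 y hy1 hy2
      linarith
    have hge : fstar ≤ f x0 := hflb ⟨x0, ⟨hx0, hx0feas⟩, rfl⟩
    have heq : hstar = f x0 := by rw [← hx0h, hfeq x0 hx0feas]
    linarith
  · constructor
    · intro hempty
      have hx0inf : A.mulVec x0 ≠ b := by
        intro hc
        have hmem : x0 ∈ ({x : Fin n → ℝ | (∀ i, x i = 1 ∨ x i = -1) ∧ A.mulVec x = b}) :=
          ⟨hx0, hc⟩
        rw [hempty] at hmem
        exact hmem
      have := h2 x0 hx0 hx0inf
      linarith [hx0h ▸ this]
    · intro hlt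
      rw [Set.eq_empty_iff_forall_notMem]
      rintro x ⟨hx1, hx2⟩
      have hle : hstar ≤ h x := hlb ⟨x, hx1, rfl⟩
      have hhx := hfeq x hx2
      have hfx := h1 x hx1 hx2
      linarith
end

section
/- Suppose ℓ̂, û ∈ ℝ satisfy ℓ̂ ≤ f(x) ≤ û for every x ∈ {−1,1}ⁿ. Define ρ_Las = max{|ℓ̂|, |û|} and σ_Las = 2·max{|ℓ̂|, |û|} + 1. Then: (1) f(x) ≤ ρ_Las for every x ∈ Δ, and (2) f(x) + σ_Las‖Ax − b‖² > ρ_Las for every x ∈ Δᶜ. -/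
open Matrix BigOperators

/-- Lemma 1 of the paper: the Lasserre parameters
`ρ_Las = max{|ℓ̂|,|û|}` and `σ_Las = 2·max{|ℓ̂|,|û|} + 1` satisfy the two
assumptions of Theorem 1 whenever `ℓ̂ ≤ f(x) ≤ û` on `{−1,1}ⁿ`. -/
theorem stmt_5 (n m : ℕ) (hn : 1 ≤ n) (hm : 1 ≤ m)
    (F : Matrix (Fin n) (Fin n) ℝ) (hFsymm : F.IsSymm)
    (c : Fin n → ℝ) (α : ℝ)
    (A : Matrix (Fin m) (Fin n) ℝ) (b : Fin m → ℝ)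
    (f : (Fin n → ℝ) → ℝ)
    (hf : ∀ x, f x = x ⬝ᵥ F.mulVec x + c ⬝ᵥ x + α)
    (hint : ∀ x : Fin n → ℝ, (∀ i, x i = 1 ∨ x i = -1) →
      ∀ i, ∃ z : ℤ, A.mulVec x i - b i = (z : ℝ))
    (lhat uhat : ℝ)
    (hbounds : ∀ x : Fin n → ℝ, (∀ i, x i = 1 ∨ x i = -1) → lhat ≤ f x ∧ f x ≤ uhat) :
    (∀ x : Fin n → ℝ, (∀ i, x i = 1 ∨ x i = -1) → A.mulVec x = b →
      f x ≤ max |lhat| |uhat|) ∧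
    (∀ x : Fin n → ℝ, (∀ i, x i = 1 ∨ x i = -1) → A.mulVec x ≠ b →
      max |lhat| |uhat| <
        f x + (2 * max |lhat| |uhat| + 1) * ∑ i, (A.mulVec x i - b i) ^ 2) := by
  set M := max |lhat| |uhat| with hM
  have hM0 : 0 ≤ M := le_trans (abs_nonneg _) (le_max_left _ _)
  constructor
  · intro x hx _
    exact le_trans (hbounds x hx).2 (le_trans (le_abs_self _) (le_max_right _ _))
  · intro x hx hne
    have hS : (1:ℝ) ≤ ∑ i, (A.mulVec x i - b i) ^ 2 := by
      have : ∃ i, A.mulVec x i ≠ b i := by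
        by_contra h
        push_neg at h
        exact hne (funext h)
      obtain ⟨i, hi⟩ := this
      obtain ⟨z, hz⟩ := hint x hx i
      have hz0 : z ≠ 0 := by
        intro h
        apply hi
        have := hz
        rw [h] at this
        simpa [sub_eq_zero] using this
      have hterm : (1:ℝ) ≤ (A.mulVec x i - b i) ^ 2 := by
        rw [hz]
        have : (1:ℤ) ≤ z ^ 2 := by
          rcases lt_or_gt_of_ne hz0 with h | h
          · nlinarith
          · nlinarith
        exact_mod_cast (by exact_mod_cast this : (1:ℝ) ≤ ((z:ℝ))^2)
      calc (1:ℝ) ≤ (A.mulVec x i - b i) ^ 2 := hterm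
        _ ≤ ∑ j, (A.mulVec x j - b j) ^ 2 :=
          Finset.single_le_sum (f := fun j => (A.mulVec x j - b j)^2) (fun j _ => sq_nonneg _) (Finset.mem_univ i)
    have hfl : lhat ≤ f x := (hbounds x hx).1
    have hMl : -M ≤ lhat := by
      have := neg_abs_le lhat
      have h2 : |lhat| ≤ M := le_max_left _ _
      linarith
    nlinarith [mul_le_mul_of_nonneg_left hS (by linarith : (0:ℝ) ≤ 2*M+1)]
end

section
/- Suppose ℓ̂, û ∈ ℝ satisfy ℓ̂ ≤ f(x) ≤ û for every x ∈ {−1,1}ⁿ. Set ρ_Las = max{|ℓ̂|, |û|}, σ_Las = 2·max{|ℓ̂|, |û|} + 1, and h(x) = f(x) + σ_Las‖Ax − b‖². Let h* = min{h(x) : x ∈ {−1,1}ⁿ}. Then: if Δ ≠ ∅, h* = min{f(x) : x ∈ Δ}; moreover Δ = ∅ if and only if h* > ρ_Las. -/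
open Matrix BigOperators

/-- Corollary 1 of the paper, Lasserre's theorem: with the Lasserre
parameters `ρ_Las = max{|ℓ̂|,|û|}`, `σ_Las = 2·max{|ℓ̂|,|û|} + 1` and
`h = f + σ_Las‖Ax − b‖²`, the minimum `h*` of `h` over `{−1,1}ⁿ` equals the
constrained minimum of `f` over `Δ` whenever `Δ ≠ ∅`, and `Δ = ∅ ↔ h* > ρ_Las`. -/
theorem stmt_6 (n m : ℕ) (hn : 1 ≤ n) (hm : 1 ≤ m)
    (F : Matrix (Fin n) (Fin n) ℝ) (hFsymm : F.IsSymm)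
    (c : Fin n → ℝ) (α : ℝ)
    (A : Matrix (Fin m) (Fin n) ℝ) (b : Fin m → ℝ)
    (f : (Fin n → ℝ) → ℝ)
    (hf : ∀ x, f x = x ⬝ᵥ F.mulVec x + c ⬝ᵥ x + α)
    (hint : ∀ x : Fin n → ℝ, (∀ i, x i = 1 ∨ x i = -1) →
      ∀ i, ∃ z : ℤ, A.mulVec x i - b i = (z : ℝ))
    (lhat uhat : ℝ)
    (hbounds : ∀ x : Fin n → ℝ, (∀ i, x i = 1 ∨ x i = -1) → lhat ≤ f x ∧ f x ≤ uhat)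
    (h : (Fin n → ℝ) → ℝ)
    (hh : ∀ x, h x = f x + (2 * max |lhat| |uhat| + 1) * ∑ i, (A.mulVec x i - b i) ^ 2)
    (hstar : ℝ)
    (hhstar : IsLeast {v : ℝ | ∃ x : Fin n → ℝ, (∀ i, x i = 1 ∨ x i = -1) ∧ h x = v} hstar) :
    (({x : Fin n → ℝ | (∀ i, x i = 1 ∨ x i = -1) ∧ A.mulVec x = b}).Nonempty →
      ∀ fstar : ℝ,
        IsLeast {v : ℝ | ∃ x : Fin n → ℝ, ((∀ i, x i = 1 ∨ x i = -1) ∧ A.mulVec x = b) ∧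
          f x = v} fstar →
        hstar = fstar) ∧
    ({x : Fin n → ℝ | (∀ i, x i = 1 ∨ x i = -1) ∧ A.mulVec x = b} = ∅ ↔
      max |lhat| |uhat| < hstar) := by
  set M := max |lhat| |uhat| with hMdef
  have hM0 : 0 ≤ M := le_trans (abs_nonneg lhat) (le_max_left _ _)
  have hlb : -M ≤ lhat := by
    have h1 := neg_abs_le lhat
    have h2 : |lhat| ≤ M := le_max_left _ _
    linarith
  have hub : uhat ≤ M := le_trans (le_abs_self uhat) (le_max_right _ _)
  have hfeas : ∀ x : Fin n → ℝ, A.mulVec x = b → h x = f x := by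
    intro x hx
    rw [hh]
    have hz : ∀ i, (A.mulVec x i - b i) ^ 2 = 0 := by
      intro i; rw [hx]; ring
    rw [Finset.sum_congr rfl (fun i _ => hz i)]
    simp
  have hinf : ∀ x : Fin n → ℝ, (∀ i, x i = 1 ∨ x i = -1) → A.mulVec x ≠ b →
      M + 1 ≤ h x := by
    intro x hpm hx
    have hS : (1 : ℝ) ≤ ∑ i, (A.mulVec x i - b i) ^ 2 := by
      have : ∃ i, A.mulVec x i ≠ b i := by
        by_contra hc; push_neg at hc; exact hx (funext hc)
      obtain ⟨i, hi⟩ := this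
      obtain ⟨z, hz⟩ := hint x hpm i
      have hz0 : z ≠ 0 := by
        intro h0; rw [h0] at hz; simp at hz; exact hi (by linarith)
      have h1 : (1 : ℝ) ≤ (A.mulVec x i - b i) ^ 2 := by
        rw [hz]
        have : (1 : ℤ) ≤ z ^ 2 := by
          nlinarith [Int.one_le_abs hz0, sq_abs z]
        exact_mod_cast this
      calc (1 : ℝ) ≤ (A.mulVec x i - b i) ^ 2 := h1
        _ ≤ ∑ j, (A.mulVec x j - b j) ^ 2 :=
            Finset.single_le_sum (f := fun j => (A.mulVec x j - b j) ^ 2)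
              (fun j _ => sq_nonneg _) (Finset.mem_univ i)
    have hfl : lhat ≤ f x := (hbounds x hpm).1
    rw [hh]
    nlinarith [hS, hfl, hM0]
  constructor
  · rintro ⟨x0, hx0pm, hx0f⟩ fstar hfstar
    obtain ⟨⟨xh, hxhpm, hxhval⟩, hhlb⟩ := hhstar
    obtain ⟨⟨xf, ⟨hxfpm, hxff⟩, hxfval⟩, hflb⟩ := hfstar
    have h1 : hstar ≤ fstar := by
      apply hhlb
      exact ⟨xf, hxfpm, by rw [hfeas xf hxff, hxfval]⟩
    have h2 : fstar ≤ hstar := by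
      by_cases hc : A.mulVec xh = b
      · have : fstar ≤ f xh := hflb ⟨xh, ⟨hxhpm, hc⟩, rfl⟩
        rw [← hxhval, hfeas xh hc]; exact this
      · exfalso
        have hge : M + 1 ≤ hstar := by rw [← hxhval]; exact hinf xh hxhpm hc
        have hle : hstar ≤ f x0 := hhlb ⟨x0, hx0pm, hfeas x0 hx0f⟩
        have := (hbounds x0 hx0pm).2
        linarith
    linarith
  · constructor
    · intro hempty
      obtain ⟨⟨xh, hxhpm, hxhval⟩, hhlb⟩ := hhstar
      have hc : A.mulVec xh ≠ b := by
        intro hc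
        have : xh ∈ {x : Fin n → ℝ | (∀ i, x i = 1 ∨ x i = -1) ∧ A.mulVec x = b} :=
          ⟨hxhpm, hc⟩
        rw [hempty] at this; exact this
      have := hinf xh hxhpm hc
      rw [hxhval] at this
      linarith
    · intro hgt
      rw [Set.eq_empty_iff_forall_notMem]
      rintro x ⟨hxpm, hxf⟩
      have hle : hstar ≤ f x := hhstar.2 ⟨x, hxpm, hfeas x hxf⟩
      have := (hbounds x hxpm).2
      linarith
end

section
/- Assume Δ ≠ ∅ and Δᶜ ≠ ∅, and let ℓ* = min{f(x) : x ∈ Δᶜ} and u* = max{f(x) : x ∈ Δ}. Then for every ε > 0 the parameters ρ* = u* and σ* = u* − ℓ* + ε satisfy: (1) f(x) ≤ ρ* for every x ∈ Δ, and (2) f(x) + σ*‖Ax − b‖² > ρ* for every x ∈ Δᶜ (provided σ* > 0, which holds since ℓ* < u* is assumed). -/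
open Matrix BigOperators

/-- Lemma 2 of the paper: with `ℓ* = min{f(x) : x ∈ Δᶜ}`,
`u* = max{f(x) : x ∈ Δ}`, `ℓ* < u*`, and any `ε > 0`, the parameters `ρ* = u*`
and `σ* = u* − ℓ* + ε` satisfy the two assumptions of Theorem 1. -/
theorem stmt_7 (n m : ℕ) (hn : 1 ≤ n) (hm : 1 ≤ m)
    (F : Matrix (Fin n) (Fin n) ℝ) (hFsymm : F.IsSymm)
    (c : Fin n → ℝ) (α : ℝ)
    (A : Matrix (Fin m) (Fin n) ℝ) (b : Fin m → ℝ)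
    (f : (Fin n → ℝ) → ℝ)
    (hf : ∀ x, f x = x ⬝ᵥ F.mulVec x + c ⬝ᵥ x + α)
    (hint : ∀ x : Fin n → ℝ, (∀ i, x i = 1 ∨ x i = -1) →
      ∀ i, ∃ z : ℤ, A.mulVec x i - b i = (z : ℝ))
    (hfeas : ({x : Fin n → ℝ | (∀ i, x i = 1 ∨ x i = -1) ∧ A.mulVec x = b}).Nonempty)
    (hinfeas : ({x : Fin n → ℝ | (∀ i, x i = 1 ∨ x i = -1) ∧ A.mulVec x ≠ b}).Nonempty)
    (lstar ustar : ℝ)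
    (hl : IsLeast {v : ℝ | ∃ x : Fin n → ℝ, ((∀ i, x i = 1 ∨ x i = -1) ∧ A.mulVec x ≠ b) ∧
      f x = v} lstar)
    (hu : IsGreatest {v : ℝ | ∃ x : Fin n → ℝ, ((∀ i, x i = 1 ∨ x i = -1) ∧ A.mulVec x = b) ∧
      f x = v} ustar)
    (hlu : lstar < ustar)
    (ε : ℝ) (hε : 0 < ε) :
    (∀ x : Fin n → ℝ, (∀ i, x i = 1 ∨ x i = -1) → A.mulVec x = b → f x ≤ ustar) ∧
    (∀ x : Fin n → ℝ, (∀ i, x i = 1 ∨ x i = -1) → A.mulVec x ≠ b →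
      ustar < f x + (ustar - lstar + ε) * ∑ i, (A.mulVec x i - b i) ^ 2) := by
  constructor
  · intro x hx hAx
    exact hu.2 ⟨x, ⟨hx, hAx⟩, rfl⟩
  · intro x hx hAx
    have hfl : lstar ≤ f x := hl.2 ⟨x, ⟨hx, hAx⟩, rfl⟩
    -- sum of squares ≥ 1
    obtain ⟨i, hi⟩ : ∃ i, A.mulVec x i ≠ b i := by
      by_contra h
      push_neg at h
      exact hAx (funext h)
    obtain ⟨z, hz⟩ := hint x hx i
    have hzne : (z : ℝ) ≠ 0 := by
      rw [← hz]; intro h; exact hi (by linarith [sub_eq_zero.mp h])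
    have hz1 : (1 : ℝ) ≤ (A.mulVec x i - b i) ^ 2 := by
      rw [hz]
      have : (1 : ℤ) ≤ z ^ 2 := by
        rcases lt_trichotomy z 0 with h | h | h
        · nlinarith
        · exact absurd (by exact_mod_cast h) hzne
        · nlinarith
      calc (1:ℝ) = ((1:ℤ):ℝ) := by norm_num
        _ ≤ ((z^2 : ℤ) : ℝ) := by exact_mod_cast this
        _ = (z:ℝ)^2 := by push_cast; ring
    have hsum : (1 : ℝ) ≤ ∑ j, (A.mulVec x j - b j) ^ 2 := by
      calc (1:ℝ) ≤ (A.mulVec x i - b i) ^ 2 := hz1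
        _ ≤ ∑ j, (A.mulVec x j - b j) ^ 2 :=
          Finset.single_le_sum (f := fun j => (A.mulVec x j - b j) ^ 2) (fun j _ => sq_nonneg _) (Finset.mem_univ i)
    have hσ : 0 < ustar - lstar + ε := by linarith
    nlinarith [mul_le_mul_of_nonneg_left hsum (le_of_lt hσ)]
end

section
/- Assume Δ ≠ ∅ and Δᶜ ≠ ∅, and let ℓ* = min{f(x) : x ∈ Δᶜ} and u* = max{f(x) : x ∈ Δ}. Let ℓ ≤ ℓ* and u ≥ u* be real numbers and let ε > 0. Then ρ = u and σ = u − ℓ + ε satisfy: (1) f(x) ≤ ρ for every x ∈ Δ, and (2) f(x) + σ‖Ax − b‖² > ρ for every x ∈ Δᶜ. -/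
open Matrix BigOperators

/-- Proposition 2 of the paper: for any bounds `ℓ ≤ ℓ*` and
`u ≥ u*` and any `ε > 0`, the parameters `ρ = u` and `σ = u − ℓ + ε` satisfy
the two assumptions of Theorem 1. -/
theorem stmt_9 (n m : ℕ) (hn : 1 ≤ n) (hm : 1 ≤ m)
    (F : Matrix (Fin n) (Fin n) ℝ) (hFsymm : F.IsSymm)
    (c : Fin n → ℝ) (α : ℝ)
    (A : Matrix (Fin m) (Fin n) ℝ) (b : Fin m → ℝ)
    (f : (Fin n → ℝ) → ℝ)
    (hf : ∀ x, f x = x ⬝ᵥ F.mulVec x + c ⬝ᵥ x + α)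
    (hint : ∀ x : Fin n → ℝ, (∀ i, x i = 1 ∨ x i = -1) →
      ∀ i, ∃ z : ℤ, A.mulVec x i - b i = (z : ℝ))
    (hfeas : ({x : Fin n → ℝ | (∀ i, x i = 1 ∨ x i = -1) ∧ A.mulVec x = b}).Nonempty)
    (hinfeas : ({x : Fin n → ℝ | (∀ i, x i = 1 ∨ x i = -1) ∧ A.mulVec x ≠ b}).Nonempty)
    (lstar ustar : ℝ)
    (hl : IsLeast {v : ℝ | ∃ x : Fin n → ℝ, ((∀ i, x i = 1 ∨ x i = -1) ∧ A.mulVec x ≠ b) ∧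
      f x = v} lstar)
    (hu : IsGreatest {v : ℝ | ∃ x : Fin n → ℝ, ((∀ i, x i = 1 ∨ x i = -1) ∧ A.mulVec x = b) ∧
      f x = v} ustar)
    (hlu : lstar < ustar)
    (l u : ℝ) (hll : l ≤ lstar) (huu : ustar ≤ u)
    (ε : ℝ) (hε : 0 < ε) :
    (∀ x : Fin n → ℝ, (∀ i, x i = 1 ∨ x i = -1) → A.mulVec x = b → f x ≤ u) ∧
    (∀ x : Fin n → ℝ, (∀ i, x i = 1 ∨ x i = -1) → A.mulVec x ≠ b →
      u < f x + (u - l + ε) * ∑ i, (A.mulVec x i - b i) ^ 2) := by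
  constructor
  · intro x hx hAx
    exact le_trans (hu.2 ⟨x, ⟨hx, hAx⟩, rfl⟩) huu
  · intro x hx hAx
    have hfx : lstar ≤ f x := hl.2 ⟨x, ⟨hx, hAx⟩, rfl⟩
    -- some coordinate differs
    have : ∃ i, A.mulVec x i ≠ b i := by
      by_contra h
      push_neg at h
      exact hAx (funext h)
    obtain ⟨i, hi⟩ := this
    obtain ⟨z, hz⟩ := hint x hx i
    have hzne : (z : ℝ) ≠ 0 := by
      rw [← hz]; exact sub_ne_zero.mpr hi
    have hz1 : (1 : ℝ) ≤ (z : ℝ) ^ 2 := by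
      have : (1 : ℤ) ≤ z ^ 2 := by
        rcases lt_trichotomy z 0 with h|h|h
        · nlinarith
        · exact absurd (by exact_mod_cast h : (z:ℝ) = 0) hzne
        · nlinarith
      exact_mod_cast this
    have hsum : (1 : ℝ) ≤ ∑ j, (A.mulVec x j - b j) ^ 2 := by
      calc (1:ℝ) ≤ (A.mulVec x i - b i) ^ 2 := by rw [hz]; exact hz1
        _ ≤ ∑ j, (A.mulVec x j - b j) ^ 2 :=
          Finset.single_le_sum (f := fun j => (A.mulVec x j - b j) ^ 2)
            (fun j _ => sq_nonneg _) (Finset.mem_univ i)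
    have hσ : 0 < u - l + ε := by linarith
    nlinarith [mul_le_mul_of_nonneg_left hsum (le_of_lt hσ)]
end

section
/- Let A ∈ ℝ^{m×n}, b ∈ ℝ^m, x ∈ ℝⁿ, and X ∈ ℝ^{n×n}, and let Y ∈ ℝ^{(n+1)×(n+1)} be the block matrix Y = [[1, xᵀ], [x, X]]. Suppose Y is positive semidefinite. Let M = [b, −A] ∈ ℝ^{m×(n+1)} (the matrix whose first column is b and whose remaining columns are −A). Then the following three conditions are equivalent: (1) Ax = b and (AXAᵀ)_{ii} = b_i² for every i ∈ {1,…,m}; (2) MYMᵀ = 0; (3) MY = 0. -/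
/-!
Factor the positive semidefinite `Y` as `Bᴴ B`: then `M Y Mᵀ = (M Bᴴ)(M Bᴴ)ᴴ` vanishes exactly when
`M Bᴴ` does, hence exactly when `M Y` does. Since `M Y Mᵀ` is itself positive semidefinite, it
vanishes iff its diagonal does, and the border structure of `Y` and `M` gives
`(M Y Mᵀ)ᵢᵢ = bᵢ² - 2 bᵢ (A x)ᵢ + (A X Aᵀ)ᵢᵢ` and `(M Y)ᵢ₀ = bᵢ - (A x)ᵢ`.
-/

open Matrix BigOperators
open scoped ComplexOrder

namespace Matrix.PosSemidef

variable {𝕜 : Type*} [RCLike 𝕜] {m n : Type*} [Fintype n]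

theorem eq_zero_of_diag_eq_zero {P : Matrix n n 𝕜} (hP : P.PosSemidef) (h : P.diag = 0) :
    P = 0 :=
  hP.trace_eq_zero_iff.mp (by simp only [trace, h, Pi.zero_apply, Finset.sum_const_zero])

open scoped MatrixOrder in
theorem mul_mul_conjTranspose_eq_zero_iff {Y : Matrix n n 𝕜} (hY : Y.PosSemidef)
    (M : Matrix m n 𝕜) : M * Y * Mᴴ = 0 ↔ M * Y = 0 := by
  classical
  obtain ⟨B, rfl⟩ := CStarAlgebra.nonneg_iff_eq_star_mul_self.mp hY.nonneg
  have hfactor : M * (star B * B) * Mᴴ = (M * Bᴴ) * (M * Bᴴ)ᴴ := by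
    simp only [star_eq_conjTranspose, conjTranspose_mul, conjTranspose_conjTranspose,
      Matrix.mul_assoc]
  refine ⟨fun h => ?_, fun h => by rw [h, Matrix.zero_mul]⟩
  rw [hfactor, self_mul_conjTranspose_eq_zero] at h
  rw [star_eq_conjTranspose, ← Matrix.mul_assoc, h, Matrix.zero_mul]

end Matrix.PosSemidef

section Bordered

variable {m n : ℕ} {A : Matrix (Fin m) (Fin n) ℝ} {b : Fin m → ℝ} {x : Fin n → ℝ}
  {X : Matrix (Fin n) (Fin n) ℝ} {Y : Matrix (Fin (n + 1)) (Fin (n + 1)) ℝ}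
  {M : Matrix (Fin m) (Fin (n + 1)) ℝ}

theorem mul_apply_zero_of_bordered (hY00 : Y 0 0 = 1) (hYi0 : ∀ i : Fin n, Y i.succ 0 = x i)
    (hM0 : ∀ i : Fin m, M i 0 = b i) (hMj : ∀ (i : Fin m) (j : Fin n), M i j.succ = -A i j)
    (i : Fin m) : (M * Y) i 0 = b i - (A *ᵥ x) i := by
  simp [mul_apply, Fin.sum_univ_succ, hY00, hYi0, hM0, hMj, mulVec, dotProduct, sub_eq_add_neg]

theorem mul_apply_succ_of_bordered (hY0j : ∀ j : Fin n, Y 0 j.succ = x j)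
    (hYij : ∀ i j : Fin n, Y i.succ j.succ = X i j)
    (hM0 : ∀ i : Fin m, M i 0 = b i) (hMj : ∀ (i : Fin m) (j : Fin n), M i j.succ = -A i j)
    (i : Fin m) (j : Fin n) : (M * Y) i j.succ = b i * x j - (A * X) i j := by
  simp [mul_apply, Fin.sum_univ_succ, hY0j, hYij, hM0, hMj, sub_eq_add_neg]

theorem mul_mul_transpose_apply_self_of_bordered (hY00 : Y 0 0 = 1)
    (hY0j : ∀ j : Fin n, Y 0 j.succ = x j) (hYi0 : ∀ i : Fin n, Y i.succ 0 = x i)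
    (hYij : ∀ i j : Fin n, Y i.succ j.succ = X i j)
    (hM0 : ∀ i : Fin m, M i 0 = b i) (hMj : ∀ (i : Fin m) (j : Fin n), M i j.succ = -A i j)
    (i : Fin m) : (M * Y * Mᵀ) i i = b i ^ 2 - 2 * b i * (A *ᵥ x) i + (A * X * Aᵀ) i i := by
  have hAx : (A *ᵥ x) i = ∑ j, x j * A i j := by simp [mulVec, dotProduct, mul_comm]
  have hAXA : (A * X * Aᵀ) i i = ∑ j, (A * X) i j * A i j := by simp [mul_apply]
  calc (M * Y * Mᵀ) i i = (M * Y) i 0 * b i - ∑ j, (M * Y) i j.succ * A i j := by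
        simp [mul_apply, Fin.sum_univ_succ, hM0, hMj, sub_eq_add_neg]
    _ = (b i - (A *ᵥ x) i) * b i - ∑ j, (b i * x j - (A * X) i j) * A i j := by
        simp only [mul_apply_zero_of_bordered hY00 hYi0 hM0 hMj,
          mul_apply_succ_of_bordered hY0j hYij hM0 hMj]
    _ = b i ^ 2 - 2 * b i * (A *ᵥ x) i + (A * X * Aᵀ) i i := by
        simp only [sub_mul, mul_assoc, Finset.sum_sub_distrib, ← Finset.mul_sum, hAx, hAXA]
        ring

end Bordered

theorem stmt_11_general (n m : ℕ)
    (A : Matrix (Fin m) (Fin n) ℝ) (b : Fin m → ℝ)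
    (x : Fin n → ℝ) (X : Matrix (Fin n) (Fin n) ℝ)
    (Y : Matrix (Fin (n + 1)) (Fin (n + 1)) ℝ)
    (hY00 : Y 0 0 = 1)
    (hY0j : ∀ j : Fin n, Y 0 j.succ = x j)
    (hYi0 : ∀ i : Fin n, Y i.succ 0 = x i)
    (hYij : ∀ i j : Fin n, Y i.succ j.succ = X i j)
    (hYpsd : Y.PosSemidef)
    (M : Matrix (Fin m) (Fin (n + 1)) ℝ)
    (hM0 : ∀ i : Fin m, M i 0 = b i)
    (hMj : ∀ (i : Fin m) (j : Fin n), M i j.succ = -A i j) :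
    ((A.mulVec x = b ∧ ∀ i : Fin m, (A * X * Aᵀ) i i = (b i) ^ 2) ↔
      M * Y * Mᵀ = 0) ∧
    (M * Y * Mᵀ = 0 ↔ M * Y = 0) := by
  have hMYM := mul_mul_transpose_apply_self_of_bordered hY00 hY0j hYi0 hYij hM0 hMj
  have hMY0 := mul_apply_zero_of_bordered hY00 hYi0 hM0 hMj
  have h23 : M * Y * Mᵀ = 0 ↔ M * Y = 0 := by
    simpa using hYpsd.mul_mul_conjTranspose_eq_zero_iff M
  refine ⟨⟨fun ⟨hAx, hdiag⟩ => ?_, fun h => ?_⟩, h23⟩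
  · have hpsd : (M * Y * Mᵀ).PosSemidef := by
      simpa using hYpsd.mul_mul_conjTranspose_same M
    refine hpsd.eq_zero_of_diag_eq_zero (funext fun i => ?_)
    simp only [diag_apply, hMYM, hAx, hdiag, Pi.zero_apply]
    ring
  · have hAx : A *ᵥ x = b := funext fun i => by
      have hcol := congr_fun₂ (h23.mp h) i 0
      rw [hMY0, Matrix.zero_apply] at hcol
      linarith
    refine ⟨hAx, fun i => ?_⟩
    have hii := hMYM i
    rw [h, Matrix.zero_apply, hAx] at hii
    linarith

/-- Burer's Proposition, Proposition 4 of the paper: for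
`Y = [[1, xᵀ],[x, X]] ⪰ 0` and `M = [b, −A]`, the following are equivalent:
(1) `Ax = b` and `diag(AXAᵀ) = b²`; (2) `MYMᵀ = 0`; (3) `MY = 0`. -/
theorem stmt_11 (n m : ℕ) (hn : 1 ≤ n) (hm : 1 ≤ m)
    (A : Matrix (Fin m) (Fin n) ℝ) (b : Fin m → ℝ)
    (x : Fin n → ℝ) (X : Matrix (Fin n) (Fin n) ℝ)
    (Y : Matrix (Fin (n + 1)) (Fin (n + 1)) ℝ)
    (hY00 : Y 0 0 = 1)
    (hY0j : ∀ j : Fin n, Y 0 j.succ = x j)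
    (hYi0 : ∀ i : Fin n, Y i.succ 0 = x i)
    (hYij : ∀ i j : Fin n, Y i.succ j.succ = X i j)
    (hYpsd : Y.PosSemidef)
    (M : Matrix (Fin m) (Fin (n + 1)) ℝ)
    (hM0 : ∀ i : Fin m, M i 0 = b i)
    (hMj : ∀ (i : Fin m) (j : Fin n), M i j.succ = -A i j) :
    ((A.mulVec x = b ∧ ∀ i : Fin m, (A * X * Aᵀ) i i = (b i) ^ 2) ↔
      M * Y * Mᵀ = 0) ∧
    (M * Y * Mᵀ = 0 ↔ M * Y = 0) :=
  stmt_11_general n m A b x X Y hY00 hY0j hYi0 hYij hYpsd M hM0 hMj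
end

section
/- Suppose ρ ∈ ℝ and σ > 0 satisfy: (1) f(x) ≤ ρ for every x ∈ Δ, and (2) h(x) > ρ for every x ∈ Δᶜ. Let Q ∈ ℝ^{(n+1)×(n+1)} be the block matrix Q = [[α + σ bᵀb, (c − 2σAᵀb)ᵀ/2], [(c − 2σAᵀb)/2, F + σAᵀA]] and let C = Diag(Qe) − Q. If z_ub ∈ ℝ satisfies x̄ᵀCx̄ ≤ z_ub for every x̄ ∈ {−1,1}^{n+1}, and z_ub < eᵀQe − ρ, then Δ = ∅. -/
open Matrix BigOperators

/-- Proposition 5 of the paper: if `z_ub` is an upper bound on the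
max-cut objective `x̄ᵀCx̄` over `{−1,1}^{n+1}` and `z_ub < eᵀQe − ρ`, then the
original problem is infeasible, i.e. `Δ = ∅`. -/
theorem stmt_13 (n m : ℕ) (hn : 1 ≤ n) (hm : 1 ≤ m)
    (F : Matrix (Fin n) (Fin n) ℝ) (hFsymm : F.IsSymm)
    (c : Fin n → ℝ) (α : ℝ)
    (A : Matrix (Fin m) (Fin n) ℝ) (b : Fin m → ℝ)
    (f : (Fin n → ℝ) → ℝ)
    (hf : ∀ x, f x = x ⬝ᵥ F.mulVec x + c ⬝ᵥ x + α)
    (hint : ∀ x : Fin n → ℝ, (∀ i, x i = 1 ∨ x i = -1) →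
      ∀ i, ∃ z : ℤ, A.mulVec x i - b i = (z : ℝ))
    (σ : ℝ) (hσ : 0 < σ)
    (h : (Fin n → ℝ) → ℝ)
    (hh : ∀ x, h x = f x + σ * ∑ i, (A.mulVec x i - b i) ^ 2)
    (ρ : ℝ)
    (h1 : ∀ x : Fin n → ℝ, (∀ i, x i = 1 ∨ x i = -1) → A.mulVec x = b → f x ≤ ρ)
    (h2 : ∀ x : Fin n → ℝ, (∀ i, x i = 1 ∨ x i = -1) → A.mulVec x ≠ b → ρ < h x)
    (Q : Matrix (Fin (n + 1)) (Fin (n + 1)) ℝ)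
    (hQ00 : Q 0 0 = α + σ * (b ⬝ᵥ b))
    (hQ0j : ∀ j : Fin n, Q 0 j.succ = (c j - 2 * σ * (Aᵀ.mulVec b) j) / 2)
    (hQi0 : ∀ i : Fin n, Q i.succ 0 = (c i - 2 * σ * (Aᵀ.mulVec b) i) / 2)
    (hQij : ∀ i j : Fin n, Q i.succ j.succ = F i j + σ * (Aᵀ * A) i j)
    (C : Matrix (Fin (n + 1)) (Fin (n + 1)) ℝ)
    (hC : C = Matrix.diagonal (Q.mulVec (fun _ => 1)) - Q)
    (zub : ℝ)
    (hzub : ∀ xbar : Fin (n + 1) → ℝ, (∀ i, xbar i = 1 ∨ xbar i = -1) →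
      xbar ⬝ᵥ C.mulVec xbar ≤ zub)
    (hlt : zub < (fun _ => (1 : ℝ)) ⬝ᵥ Q.mulVec (fun _ => 1) - ρ) :
    {x : Fin n → ℝ | (∀ i, x i = 1 ∨ x i = -1) ∧ A.mulVec x = b} = ∅ := by
  ext x
  simp only [Set.mem_setOf_eq, Set.mem_empty_iff_false, iff_false]
  rintro ⟨hx, hAx⟩
  set xbar : Fin (n + 1) → ℝ := Fin.cons 1 x with hxbar
  have hxb : ∀ i, xbar i = 1 ∨ xbar i = -1 := by
    intro i
    refine Fin.cases ?_ ?_ i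
    · left; simp [hxbar]
    · intro j; simpa [hxbar] using hx j
  -- expand quadratic form
  have expand : xbar ⬝ᵥ Q.mulVec xbar =
      Q 0 0 + (∑ j, Q 0 j.succ * x j) + (∑ i, x i * Q i.succ 0)
        + ∑ i, x i * ∑ j, Q i.succ j.succ * x j := by
    simp only [dotProduct, Matrix.mulVec, Fin.sum_univ_succ, hxbar,
      Fin.cons_zero, Fin.cons_succ, one_mul, mul_one, mul_add, Finset.sum_add_distrib]
    ring
  have e1 : ∑ j, Q 0 j.succ * x j = (c ⬝ᵥ x) / 2 - σ * (b ⬝ᵥ b) := by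
    have : ∀ j ∈ Finset.univ, Q 0 j.succ * x j
        = c j * x j / 2 - σ * ((Aᵀ.mulVec b) j * x j) := by
      intro j _; rw [hQ0j]; ring
    rw [Finset.sum_congr rfl this, Finset.sum_sub_distrib, ← Finset.mul_sum]
    have hAtb : Aᵀ.mulVec b ⬝ᵥ x = b ⬝ᵥ b := by
      rw [Matrix.mulVec_transpose, ← Matrix.dotProduct_mulVec, hAx]
    simp only [dotProduct] at hAtb ⊢
    rw [hAtb, ← Finset.sum_div]
  have e2 : ∑ i, x i * Q i.succ 0 = (c ⬝ᵥ x) / 2 - σ * (b ⬝ᵥ b) := by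
    rw [← e1]
    refine Finset.sum_congr rfl fun i _ => ?_
    rw [hQ0j, hQi0]; ring
  have e3 : ∑ i, x i * ∑ j, Q i.succ j.succ * x j
      = x ⬝ᵥ F.mulVec x + σ * (b ⬝ᵥ b) := by
    have hAtA : x ⬝ᵥ (Aᵀ * A).mulVec x = b ⬝ᵥ b := by
      rw [← Matrix.mulVec_mulVec, Matrix.dotProduct_mulVec, Matrix.vecMul_transpose, hAx]
    have step : ∀ i ∈ Finset.univ, x i * ∑ j, Q i.succ j.succ * x j
        = x i * (∑ j, F i j * x j) + σ * (x i * ∑ j, (Aᵀ * A) i j * x j) := by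
      intro i _
      have inner : ∀ j ∈ Finset.univ, Q i.succ j.succ * x j
          = F i j * x j + σ * ((Aᵀ * A) i j * x j) := fun j _ => by rw [hQij]; ring
      rw [Finset.sum_congr rfl inner, Finset.sum_add_distrib, ← Finset.mul_sum]
      ring
    rw [Finset.sum_congr rfl step, Finset.sum_add_distrib, ← Finset.mul_sum]
    simp only [dotProduct, Matrix.mulVec] at hAtA ⊢
    rw [hAtA]
  have key : xbar ⬝ᵥ Q.mulVec xbar = f x := by
    rw [expand, hQ00, e1, e2, e3, hf]; ring
  -- diagonal part
  have diag : xbar ⬝ᵥ (Matrix.diagonal (Q.mulVec (fun _ => 1))).mulVec xbar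
      = (fun _ => (1 : ℝ)) ⬝ᵥ Q.mulVec (fun _ => 1) := by
    simp only [dotProduct, Matrix.mulVec_diagonal, one_mul]
    refine Finset.sum_congr rfl fun i _ => ?_
    rcases hxb i with h' | h' <;> rw [h'] <;> ring
  have hCval : xbar ⬝ᵥ C.mulVec xbar
      = (fun _ => (1 : ℝ)) ⬝ᵥ Q.mulVec (fun _ => 1) - f x := by
    rw [hC, Matrix.sub_mulVec, dotProduct_sub, diag, key]
  have hle := hzub xbar hxb
  have hfx := h1 x hx hAx
  rw [hCval] at hle
  linarith
end

section
/- Suppose ρ ∈ ℝ and σ > 0 satisfy: (1) f(x) ≤ ρ for every x ∈ Δ, and (2) h(x) > ρ for every x ∈ Δᶜ. Let Q ∈ ℝ^{(n+1)×(n+1)} be the block matrix Q = [[α + σ bᵀb, (c − 2σAᵀb)ᵀ/2], [(c − 2σAᵀb)/2, F + σAᵀA]] and let C = Diag(Qe) − Q. If x̄ ∈ {−1,1}^{n+1} satisfies x̄ᵀCx̄ ≥ eᵀQe − ρ, then the vector x_lb ∈ {−1,1}ⁿ defined by (x_lb)_j = x̄₀ · x̄_j for j = 1,…,n (i.e.,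 x̄ or −x̄ normalized so that its first component equals 1, with the first component dropped) satisfies A x_lb = b, i.e., x_lb ∈ Δ. -/
open Matrix BigOperators

/-- Lemma 4 of the paper: any cut `x̄ ∈ {−1,1}^{n+1}` with value
`x̄ᵀCx̄ ≥ eᵀQe − ρ` yields a feasible vector `x_lb ∈ Δ`, where
`(x_lb)_j = x̄₀ · x̄_j` (i.e. `x̄` normalized so that its first entry is `1`,
with the first entry dropped). -/
theorem stmt_14 (n m : ℕ) (hn : 1 ≤ n) (hm : 1 ≤ m)
    (F : Matrix (Fin n) (Fin n) ℝ) (hFsymm : F.IsSymm)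
    (c : Fin n → ℝ) (α : ℝ)
    (A : Matrix (Fin m) (Fin n) ℝ) (b : Fin m → ℝ)
    (f : (Fin n → ℝ) → ℝ)
    (hf : ∀ x, f x = x ⬝ᵥ F.mulVec x + c ⬝ᵥ x + α)
    (hint : ∀ x : Fin n → ℝ, (∀ i, x i = 1 ∨ x i = -1) →
      ∀ i, ∃ z : ℤ, A.mulVec x i - b i = (z : ℝ))
    (σ : ℝ) (hσ : 0 < σ)
    (h : (Fin n → ℝ) → ℝ)
    (hh : ∀ x, h x = f x + σ * ∑ i, (A.mulVec x i - b i) ^ 2)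
    (ρ : ℝ)
    (h1 : ∀ x : Fin n → ℝ, (∀ i, x i = 1 ∨ x i = -1) → A.mulVec x = b → f x ≤ ρ)
    (h2 : ∀ x : Fin n → ℝ, (∀ i, x i = 1 ∨ x i = -1) → A.mulVec x ≠ b → ρ < h x)
    (Q : Matrix (Fin (n + 1)) (Fin (n + 1)) ℝ)
    (hQ00 : Q 0 0 = α + σ * (b ⬝ᵥ b))
    (hQ0j : ∀ j : Fin n, Q 0 j.succ = (c j - 2 * σ * (Aᵀ.mulVec b) j) / 2)
    (hQi0 : ∀ i : Fin n, Q i.succ 0 = (c i - 2 * σ * (Aᵀ.mulVec b) i) / 2)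
    (hQij : ∀ i j : Fin n, Q i.succ j.succ = F i j + σ * (Aᵀ * A) i j)
    (C : Matrix (Fin (n + 1)) (Fin (n + 1)) ℝ)
    (hC : C = Matrix.diagonal (Q.mulVec (fun _ => 1)) - Q)
    (xbar : Fin (n + 1) → ℝ) (hxbar : ∀ i, xbar i = 1 ∨ xbar i = -1)
    (hge : (fun _ => (1 : ℝ)) ⬝ᵥ Q.mulVec (fun _ => 1) - ρ ≤ xbar ⬝ᵥ C.mulVec xbar) :
    (∀ j : Fin n, xbar 0 * xbar j.succ = 1 ∨ xbar 0 * xbar j.succ = -1) ∧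
      A.mulVec (fun j => xbar 0 * xbar j.succ) = b :=  by
  classical
  set x : Fin n → ℝ := fun j => xbar 0 * xbar j.succ with hx
  have hs : ∀ i, xbar i * xbar i = 1 := by
    intro i; rcases hxbar i with h' | h' <;> rw [h'] <;> ring
  have hxpm : ∀ j : Fin n, xbar 0 * xbar j.succ = 1 ∨ xbar 0 * xbar j.succ = -1 := by
    intro j
    rcases hxbar 0 with h0 | h0 <;> rcases hxbar j.succ with hj | hj <;>
      rw [h0, hj] <;> norm_num
  refine ⟨hxpm, ?_⟩
  have hxpm' : ∀ j : Fin n, x j = 1 ∨ x j = -1 := hxpm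
  by_contra hne
  have hgt := h2 x hxpm' hne
  -- Step B : xbar C xbar = eQe - xbar Q xbar
  have hB : xbar ⬝ᵥ C.mulVec xbar
      = (fun _ => (1 : ℝ)) ⬝ᵥ Q.mulVec (fun _ => 1) - xbar ⬝ᵥ Q.mulVec xbar := by
    rw [hC, Matrix.sub_mulVec, dotProduct_sub]
    congr 1
    simp only [dotProduct, Matrix.mulVec_diagonal, one_mul]
    refine Finset.sum_congr rfl fun i _ => ?_
    linear_combination (Q.mulVec (fun _ => 1) i) * hs i
  -- Step C : yQy = xbar Q xbar, where y i = xbar 0 * xbar i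
  have hCC : (fun i => xbar 0 * xbar i) ⬝ᵥ Q.mulVec (fun i => xbar 0 * xbar i)
      = xbar ⬝ᵥ Q.mulVec xbar := by
    simp only [dotProduct, Matrix.mulVec, dotProduct, Finset.mul_sum]
    refine Finset.sum_congr rfl fun i _ => ?_
    refine Finset.sum_congr rfl fun j _ => ?_
    linear_combination (xbar i * Q i j * xbar j) * hs 0
  -- auxiliary dot product identities
  have aux1 : ∀ u : Fin m → ℝ, x ⬝ᵥ Aᵀ.mulVec u = A.mulVec x ⬝ᵥ u := by
    intro u
    rw [Matrix.dotProduct_mulVec, Matrix.vecMul_transpose]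
  have hAA : x ⬝ᵥ (Aᵀ * A).mulVec x = A.mulVec x ⬝ᵥ A.mulVec x := by
    rw [← Matrix.mulVec_mulVec, aux1]
  have hsum : ∑ i, (A.mulVec x i - b i) ^ 2
      = A.mulVec x ⬝ᵥ A.mulVec x - 2 * (A.mulVec x ⬝ᵥ b) + b ⬝ᵥ b := by
    simp only [dotProduct, Finset.mul_sum, ← Finset.sum_sub_distrib,
      ← Finset.sum_add_distrib]
    refine Finset.sum_congr rfl fun i _ => ?_
    ring
  -- Step D : yQy = h x
  have hy : (fun i => xbar 0 * xbar i) = Fin.cons 1 x := by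
    funext i
    refine Fin.cases ?_ (fun j => ?_) i
    · simpa using hs 0
    · simp [hx]
  have e1 : ∑ j, (c j - 2 * σ * (Aᵀ.mulVec b) j) / 2 * x j
      + ∑ i, x i * ((c i - 2 * σ * (Aᵀ.mulVec b) i) / 2)
      = c ⬝ᵥ x - 2 * σ * (x ⬝ᵥ Aᵀ.mulVec b) := by
    simp only [dotProduct, Finset.mul_sum, ← Finset.sum_sub_distrib,
      ← Finset.sum_add_distrib]
    refine Finset.sum_congr rfl fun j _ => ?_
    ring
  have e2 : ∑ i, x i * ∑ j, (F i j + σ * (Aᵀ * A) i j) * x j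
      = x ⬝ᵥ F.mulVec x + σ * (x ⬝ᵥ (Aᵀ * A).mulVec x) := by
    simp only [dotProduct, Matrix.mulVec, dotProduct, Finset.mul_sum,
      ← Finset.sum_add_distrib]
    refine Finset.sum_congr rfl fun i _ => ?_
    refine Finset.sum_congr rfl fun j _ => ?_
    ring
  have expand : (Fin.cons (1 : ℝ) x) ⬝ᵥ Q.mulVec (Fin.cons (1 : ℝ) x)
      = Q 0 0 + (∑ j, Q 0 j.succ * x j) + (∑ i, x i * Q i.succ 0)
        + ∑ i, x i * ∑ j, Q i.succ j.succ * x j := by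
    simp only [dotProduct, Matrix.mulVec, dotProduct, Fin.sum_univ_succ,
      Fin.cons_zero, Fin.cons_succ, one_mul, mul_one, mul_add,
      Finset.sum_add_distrib]
    ring
  have hsum' : ∑ i, (A.mulVec x i - b i) ^ 2
      = x ⬝ᵥ (Aᵀ * A).mulVec x - 2 * (x ⬝ᵥ Aᵀ.mulVec b) + b ⬝ᵥ b := by
    rw [hsum, hAA, aux1]
  have hD : (fun i => xbar 0 * xbar i) ⬝ᵥ Q.mulVec (fun i => xbar 0 * xbar i) = h x := by
    rw [hy, expand, hQ00]
    simp only [hQ0j, hQi0, hQij]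
    rw [hh, hf, hsum']
    linear_combination e1 + e2
  -- conclusion
  have hle : h x ≤ ρ := by
    have := hge
    rw [hB] at this
    have hq : xbar ⬝ᵥ Q.mulVec xbar ≤ ρ := by linarith
    rw [← hD, hCC]
    exact hq
  linarith
end

section
/- Suppose x′ ∈ Δ is a feasible solution, Δᶜ ≠ ∅, and ℓ ∈ ℝ satisfies ℓ ≤ min{f(x) : x ∈ Δᶜ}. Let ε > 0 and define the penalty parameter σ′ = f(x′) − ℓ + ε and h(x) = f(x) + σ′‖Ax − b‖² (assume σ′ > 0). Then min{h(x) : x ∈ {−1,1}ⁿ} = min{f(x) : x ∈ Δ}. -/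
open Matrix BigOperators

/-- Theorem 2 of the paper: if a feasible solution `x′ ∈ Δ` is known,
`Δᶜ ≠ ∅`, `ℓ ≤ min{f(x) : x ∈ Δᶜ}`, and `σ′ = f(x′) − ℓ + ε > 0` for some `ε > 0`,
then the minimum of `h = f + σ′‖Ax − b‖²` over `{−1,1}ⁿ` equals the minimum of `f`
over `Δ`. -/
theorem stmt_15 (n m : ℕ) (hn : 1 ≤ n) (hm : 1 ≤ m)
    (F : Matrix (Fin n) (Fin n) ℝ) (hFsymm : F.IsSymm)
    (c : Fin n → ℝ) (α : ℝ)
    (A : Matrix (Fin m) (Fin n) ℝ) (b : Fin m → ℝ)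
    (f : (Fin n → ℝ) → ℝ)
    (hf : ∀ x, f x = x ⬝ᵥ F.mulVec x + c ⬝ᵥ x + α)
    (hint : ∀ x : Fin n → ℝ, (∀ i, x i = 1 ∨ x i = -1) →
      ∀ i, ∃ z : ℤ, A.mulVec x i - b i = (z : ℝ))
    (x' : Fin n → ℝ) (hx'pm : ∀ i, x' i = 1 ∨ x' i = -1) (hx'feas : A.mulVec x' = b)
    (hinfeas : ({x : Fin n → ℝ | (∀ i, x i = 1 ∨ x i = -1) ∧ A.mulVec x ≠ b}).Nonempty)
    (l : ℝ)
    (hl : ∀ x : Fin n → ℝ, (∀ i, x i = 1 ∨ x i = -1) → A.mulVec x ≠ b → l ≤ f x)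
    (ε : ℝ) (hε : 0 < ε)
    (σ' : ℝ) (hσ'def : σ' = f x' - l + ε) (hσ'pos : 0 < σ')
    (h : (Fin n → ℝ) → ℝ)
    (hh : ∀ x, h x = f x + σ' * ∑ i, (A.mulVec x i - b i) ^ 2)
    (hstar fstar : ℝ)
    (hhstar : IsLeast {v : ℝ | ∃ x : Fin n → ℝ, (∀ i, x i = 1 ∨ x i = -1) ∧ h x = v} hstar)
    (hfstar : IsLeast {v : ℝ | ∃ x : Fin n → ℝ, ((∀ i, x i = 1 ∨ x i = -1) ∧
      A.mulVec x = b) ∧ f x = v} fstar) :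
    hstar = fstar := by
  obtain ⟨hstar_mem, hstar_lb⟩ := hhstar
  obtain ⟨fstar_mem, fstar_lb⟩ := hfstar
  -- penalty ≥ 1 for infeasible points
  have key : ∀ x : Fin n → ℝ, (∀ i, x i = 1 ∨ x i = -1) → A.mulVec x ≠ b →
      (1 : ℝ) ≤ ∑ i, (A.mulVec x i - b i) ^ 2 := by
    intro x hpm hne
    obtain ⟨i, hi⟩ : ∃ i, A.mulVec x i ≠ b i := by
      by_contra hc
      push_neg at hc
      exact hne (funext hc)
    obtain ⟨z, hz⟩ := hint x hpm i
    have hz0 : z ≠ 0 := by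
      rintro rfl
      simp at hz
      exact hi (by linarith)
    have h1 : (1 : ℝ) ≤ (A.mulVec x i - b i) ^ 2 := by
      rw [hz]
      have hz2 : (1 : ℤ) ≤ z ^ 2 := by
        have := Int.one_le_abs (by simpa using hz0)
        nlinarith [sq_abs z]
      exact_mod_cast hz2
    calc (1 : ℝ) ≤ (A.mulVec x i - b i) ^ 2 := h1
      _ ≤ ∑ j, (A.mulVec x j - b j) ^ 2 :=
        Finset.single_le_sum (f := fun j => (A.mulVec x j - b j) ^ 2)
          (fun j _ => sq_nonneg _) (Finset.mem_univ i)
  -- h = f on feasible points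
  have hf_eq : ∀ x : Fin n → ℝ, A.mulVec x = b → h x = f x := by
    intro x hx
    rw [hh x, hx]
    simp
  -- fstar ≤ f x'
  have hfx' : fstar ≤ f x' := fstar_lb ⟨x', ⟨hx'pm, hx'feas⟩, rfl⟩
  -- hstar ≤ fstar
  obtain ⟨xf, ⟨⟨hxfpm, hxffeas⟩, hxfval⟩⟩ := fstar_mem
  have h1 : hstar ≤ fstar := by
    have := hstar_lb ⟨xf, hxfpm, rfl⟩
    rw [hf_eq xf hxffeas, hxfval] at this
    exact this
  -- fstar ≤ hstar
  obtain ⟨x0, hx0pm, hx0val⟩ := hstar_mem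
  have h2 : fstar ≤ hstar := by
    by_cases hfeas : A.mulVec x0 = b
    · rw [← hx0val, hf_eq x0 hfeas]
      exact fstar_lb ⟨x0, ⟨hx0pm, hfeas⟩, rfl⟩
    · exfalso
      have hs : (1 : ℝ) ≤ ∑ i, (A.mulVec x0 i - b i) ^ 2 := key x0 hx0pm hfeas
      have hlx0 : l ≤ f x0 := hl x0 hx0pm hfeas
      have hx0big : f x' + ε ≤ h x0 := by
        rw [hh x0]
        have : σ' * 1 ≤ σ' * ∑ i, (A.mulVec x0 i - b i) ^ 2 :=
          mul_le_mul_of_nonneg_left hs hσ'pos.le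
        nlinarith
      have hle : hstar ≤ f x' := by
        have := hstar_lb ⟨x', hx'pm, rfl⟩
        rwa [hf_eq x' hx'feas] at this
      linarith [hx0val ▸ hx0big]
  linarith
end

section
/- Suppose ℓ, u ∈ ℝ satisfy ℓ ≤ f(x) ≤ u for every x ∈ {−1,1}ⁿ, let ε > 0, and define σ = u − ℓ + ε and h(x) = f(x) + σ‖Ax − b‖². Then for any two vectors x₁, x₂ ∈ {−1,1}ⁿ, if h(x₁) ≤ h(x₂) then ‖Ax₁ − b‖ ≤ ‖Ax₂ − b‖. In particular, any minimizer of h over {−1,1}ⁿ minimizes ‖Ax − b‖ over {−1,1}ⁿ. -/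
open Matrix BigOperators

/-- Lemma 5 of the paper: with `ℓ ≤ f ≤ u` on `{−1,1}ⁿ` and
`σ = u − ℓ + ε` for `ε > 0`, if `h(x₁) ≤ h(x₂)` for `x₁, x₂ ∈ {−1,1}ⁿ` then
`‖Ax₁ − b‖ ≤ ‖Ax₂ − b‖`; in particular any minimizer of `h` over `{−1,1}ⁿ`
minimizes `‖Ax − b‖` over `{−1,1}ⁿ`. -/
theorem stmt_16 (n m : ℕ) (hn : 1 ≤ n) (hm : 1 ≤ m)
    (F : Matrix (Fin n) (Fin n) ℝ) (hFsymm : F.IsSymm)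
    (c : Fin n → ℝ) (α : ℝ)
    (A : Matrix (Fin m) (Fin n) ℝ) (b : Fin m → ℝ)
    (f : (Fin n → ℝ) → ℝ)
    (hf : ∀ x, f x = x ⬝ᵥ F.mulVec x + c ⬝ᵥ x + α)
    (hint : ∀ x : Fin n → ℝ, (∀ i, x i = 1 ∨ x i = -1) →
      ∀ i, ∃ z : ℤ, A.mulVec x i - b i = (z : ℝ))
    (l u : ℝ)
    (hbounds : ∀ x : Fin n → ℝ, (∀ i, x i = 1 ∨ x i = -1) → l ≤ f x ∧ f x ≤ u)
    (ε : ℝ) (hε : 0 < ε)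
    (h : (Fin n → ℝ) → ℝ)
    (hh : ∀ x, h x = f x + (u - l + ε) * ∑ i, (A.mulVec x i - b i) ^ 2) :
    (∀ x₁ x₂ : Fin n → ℝ, (∀ i, x₁ i = 1 ∨ x₁ i = -1) → (∀ i, x₂ i = 1 ∨ x₂ i = -1) →
      h x₁ ≤ h x₂ →
      Real.sqrt (∑ i, (A.mulVec x₁ i - b i) ^ 2) ≤
        Real.sqrt (∑ i, (A.mulVec x₂ i - b i) ^ 2)) ∧
    (∀ xstar : Fin n → ℝ, (∀ i, xstar i = 1 ∨ xstar i = -1) →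
      (∀ x : Fin n → ℝ, (∀ i, x i = 1 ∨ x i = -1) → h xstar ≤ h x) →
      ∀ x : Fin n → ℝ, (∀ i, x i = 1 ∨ x i = -1) →
        Real.sqrt (∑ i, (A.mulVec xstar i - b i) ^ 2) ≤
          Real.sqrt (∑ i, (A.mulVec x i - b i) ^ 2)) := by

  have key : ∀ x₁ x₂ : Fin n → ℝ, (∀ i, x₁ i = 1 ∨ x₁ i = -1) → (∀ i, x₂ i = 1 ∨ x₂ i = -1) →
      h x₁ ≤ h x₂ →
      Real.sqrt (∑ i, (A.mulVec x₁ i - b i) ^ 2) ≤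
        Real.sqrt (∑ i, (A.mulVec x₂ i - b i) ^ 2) := by
    intro x₁ x₂ hx₁ hx₂ hle
    apply Real.sqrt_le_sqrt
    -- integrality of the sums
    have hZ : ∀ x : Fin n → ℝ, (∀ i, x i = 1 ∨ x i = -1) →
        ∃ z : ℤ, (∑ i, (A.mulVec x i - b i) ^ 2) = (z : ℝ) := by
      intro x hx
      choose z hz using hint x hx
      exact ⟨∑ i, (z i) ^ 2, by push_cast; exact Finset.sum_congr rfl fun i _ => by rw [hz i]⟩
    obtain ⟨z₁, hz₁⟩ := hZ x₁ hx₁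
    obtain ⟨z₂, hz₂⟩ := hZ x₂ hx₂
    rw [hz₁, hz₂]
    have hul : l ≤ u := by
      have := hbounds (fun _ => 1) (fun i => Or.inl rfl)
      linarith [this.1, this.2]
    have hσ : (0:ℝ) < u - l + ε := by linarith
    have hb1 := hbounds x₁ hx₁
    have hb2 := hbounds x₂ hx₂
    have hmain : (u - l + ε) * ((z₁:ℝ) - z₂) ≤ u - l := by
      have := hle
      rw [hh x₁, hh x₂, hz₁, hz₂] at this
      nlinarith [hb1.1, hb2.2]
    have hlt : ((z₁:ℝ) - z₂) < 1 := by
      by_contra hc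
      push_neg at hc
      nlinarith
    have hlt' : z₁ - z₂ < 1 := by exact_mod_cast hlt
    have : z₁ ≤ z₂ := by omega
    exact_mod_cast this
  refine ⟨key, ?_⟩
  intro xstar hxs hmin x hx
  exact key xstar x hxs hx (hmin x hx)
end
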